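/- arXiv:1502.05888 — 9 statements merged into one kernel-verified Lean document; each statement's English description precedes it below -/
import Mathlib

section
/- The maxcard Condorcet rule admits an equivalent maximization formulation: MCC(P) equals the set of rational judgment sets J maximizing |J ∩ m(P)|. -/
open scoped NNReal

variable {Φ : Type*} [DecidableEq Φ]

/-- Number of voters in profile `P` accepting `φ`. -/
def Nacc {n : ℕ} (P : Fin n → Finset Φ) (φ : Φ) : ℕ :=
  (Finset.univ.filter fun i => φ ∈ P i).card

/-- The majoritarian judgment set `m(P)`: agenda elements accepted by a strict majority. -/
def maj (A : Finset Φ) {n : ℕ} (P : Fin n → Finset Φ) : Finset Φ :=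
  A.filter fun φ => n < 2 * Nacc P φ

/-- A rational judgment set: a complete and consistent subset of the agenda. -/
def Rational (A : Finset Φ) (neg : Φ → Φ) (Cons : Finset Φ → Prop) (J : Finset Φ) : Prop :=
  J ⊆ A ∧ (∀ φ ∈ A, φ ∈ J ∨ neg φ ∈ J) ∧ Cons J

/-- The set of rational extensions of `S`. -/
def extSet (A : Finset Φ) (neg : Φ → Φ) (Cons : Finset Φ → Prop) (S : Finset Φ) :
    Set (Finset Φ) :=
  {J | Rational A neg Cons J ∧ S ⊆ J}

/-!
Consistency is inherited by subsets, so for a rational `J` the set `J ∩ m(P)` is a consistent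
subset of `m(P)`, and every consistent subset of `m(P)` extends to a rational `J'` with
`T ⊆ J' ∩ m(P)`. Hence the maximum of `|S|` over consistent `S ⊆ m(P)` coincides with the maximum
of `|J ∩ m(P)|` over rational `J`, and a rational `J` attains it exactly when it contains a
maximum-cardinality consistent subset of `m(P)`, namely `J ∩ m(P)`.
-/

theorem maj_subset (A : Finset Φ) {n : ℕ} (P : Fin n → Finset Φ) : maj A P ⊆ A :=
  Finset.filter_subset _ _

section MaxCard

variable {A : Finset Φ} {neg : Φ → Φ} {Cons : Finset Φ → Prop}

theorem card_inter_le_of_maxCard (hmono : ∀ S T : Finset Φ, S ⊆ T → Cons T → Cons S)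
    {M S J : Finset Φ} (hSmax : ∀ T ⊆ M, Cons T → T.card ≤ S.card) (hJ : Cons J) :
    (J ∩ M).card ≤ S.card :=
  hSmax _ Finset.inter_subset_right (hmono _ _ Finset.inter_subset_left hJ)

theorem exists_rational_card_le_card_inter
    (hext : ∀ S : Finset Φ, S ⊆ A → Cons S → ∃ J, Rational A neg Cons J ∧ S ⊆ J)
    {M T : Finset Φ} (hMA : M ⊆ A) (hTM : T ⊆ M) (hT : Cons T) :
    ∃ J, Rational A neg Cons J ∧ T.card ≤ (J ∩ M).card := by
  obtain ⟨J, hJ, hTJ⟩ := hext T (hTM.trans hMA) hT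
  exact ⟨J, hJ, Finset.card_le_card (Finset.subset_inter hTJ hTM)⟩

theorem extensions_of_maxCard_eq_argmax_card_inter
    (hmono : ∀ S T : Finset Φ, S ⊆ T → Cons T → Cons S)
    (hext : ∀ S : Finset Φ, S ⊆ A → Cons S → ∃ J, Rational A neg Cons J ∧ S ⊆ J)
    {M : Finset Φ} (hMA : M ⊆ A) :
    {J | Rational A neg Cons J ∧ ∃ S ⊆ M, Cons S ∧
        (∀ T ⊆ M, Cons T → T.card ≤ S.card) ∧ S ⊆ J}
      = {J | Rational A neg Cons J ∧
          ∀ J', Rational A neg Cons J' → (J' ∩ M).card ≤ (J ∩ M).card} := by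
  ext J
  constructor
  · rintro ⟨hJ, S, hSM, -, hSmax, hSJ⟩
    refine ⟨hJ, fun J' hJ' => ?_⟩
    calc (J' ∩ M).card ≤ S.card := card_inter_le_of_maxCard hmono hSmax hJ'.2.2
      _ ≤ (J ∩ M).card := Finset.card_le_card (Finset.subset_inter hSJ hSM)
  · rintro ⟨hJ, hJmax⟩
    refine ⟨hJ, J ∩ M, Finset.inter_subset_right, hmono _ _ Finset.inter_subset_left hJ.2.2,
      fun T hTM hT => ?_, Finset.inter_subset_left⟩
    obtain ⟨J', hJ', hTJ'⟩ := exists_rational_card_le_card_inter hext hMA hTM hT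
    exact hTJ'.trans (hJmax J' hJ')

end MaxCard

theorem mcc_eq_argmax_general
    (A : Finset Φ) (neg : Φ → Φ) (Cons : Finset Φ → Prop)
    (hmono : ∀ S T : Finset Φ, S ⊆ T → Cons T → Cons S)
    (hext : ∀ S : Finset Φ, S ⊆ A → Cons S → ∃ J, Rational A neg Cons J ∧ S ⊆ J)
    {n : ℕ} (P : Fin n → Finset Φ) :
    {J | Rational A neg Cons J ∧ ∃ S ⊆ maj A P, Cons S ∧
        (∀ T ⊆ maj A P, Cons T → T.card ≤ S.card) ∧ S ⊆ J}
      = {J | Rational A neg Cons J ∧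
          ∀ J', Rational A neg Cons J' → (J' ∩ maj A P).card ≤ (J ∩ maj A P).card} :=
  extensions_of_maxCard_eq_argmax_card_inter hmono hext (maj_subset A P)

/-- `MCC(P)` (rational extensions of maximum-cardinality consistent subsets of
`m(P)`) equals the set of rational judgment sets maximizing `|J ∩ m(P)|`. -/
theorem mcc_eq_argmax
    (A : Finset Φ) (neg : Φ → Φ) (Cons : Finset Φ → Prop)
    (hmono : ∀ S T : Finset Φ, S ⊆ T → Cons T → Cons S)
    (hext : ∀ S : Finset Φ, S ⊆ A → Cons S → ∃ J, Rational A neg Cons J ∧ S ⊆ J)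
    (hne : ∃ J, Rational A neg Cons J)
    {n : ℕ} (P : Fin n → Finset Φ) :
    {J | Rational A neg Cons J ∧ ∃ S ⊆ maj A P, Cons S ∧
        (∀ T ⊆ maj A P, Cons T → T.card ≤ S.card) ∧ S ⊆ J}
      = {J | Rational A neg Cons J ∧
          ∀ J', Rational A neg Cons J' → (J' ∩ maj A P).card ≤ (J ∩ maj A P).card} :=
  mcc_eq_argmax_general A neg Cons hmono hext P
end

section
/- The rules MC, MCC, MED, RA, Young, and MPC are majority-preserving: whenever m(P) is consistent, the rule outputs exactly the set of rational extensions of m(P). -/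
open scoped NNReal

variable {Φ : Type*} [DecidableEq Φ]

/-- The maximal-Condorcet rule: rational extensions of inclusion-maximal consistent
subsets of `m(P)`. -/
def MC (A : Finset Φ) (neg : Φ → Φ) (Cons : Finset Φ → Prop) {n : ℕ}
    (P : Fin n → Finset Φ) : Set (Finset Φ) :=
  {J | Rational A neg Cons J ∧ ∃ S ⊆ maj A P, Cons S ∧
      (∀ T, S ⊆ T → T ⊆ maj A P → Cons T → T = S) ∧ S ⊆ J}

/-- The maxcard-Condorcet rule: rational extensions of maximum-cardinality consistent
subsets of `m(P)`. -/
def MCC (A : Finset Φ) (neg : Φ → Φ) (Cons : Finset Φ → Prop) {n : ℕ}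
    (P : Fin n → Finset Φ) : Set (Finset Φ) :=
  {J | Rational A neg Cons J ∧ ∃ S ⊆ maj A P, Cons S ∧
      (∀ T ⊆ maj A P, Cons T → T.card ≤ S.card) ∧ S ⊆ J}

/-- The median rule: rational judgment sets maximizing `Σ_{φ∈J} N(P,φ)`. -/
def MED (A : Finset Φ) (neg : Φ → Φ) (Cons : Finset Φ → Prop) {n : ℕ}
    (P : Fin n → Finset Φ) : Set (Finset Φ) :=
  {J | Rational A neg Cons J ∧ ∀ J', Rational A neg Cons J' →
      ∑ φ ∈ J', Nacc P φ ≤ ∑ φ ∈ J, Nacc P φ}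

open Classical in
/-- Greedy procedure: add each element of the list in turn if it keeps the set consistent. -/
noncomputable def greedy (Cons : Finset Φ → Prop) : List Φ → Finset Φ → Finset Φ
  | [], S => S
  | φ :: l, S =>
      if Cons (insert φ S) then greedy Cons l (insert φ S) else greedy Cons l S

/-- The ranked-agenda rule: outcomes of the greedy procedure along some enumeration of the
agenda in non-increasing order of `N(P,·)`. -/
def RA (A : Finset Φ) (Cons : Finset Φ → Prop) {n : ℕ}
    (P : Fin n → Finset Φ) : Set (Finset Φ) :=
  {J | ∃ l : List Φ, l.Nodup ∧ (∀ φ, φ ∈ l ↔ φ ∈ A) ∧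
      l.Pairwise (fun a b => Nacc P b ≤ Nacc P a) ∧ J = greedy Cons l ∅}

/-- Number of voters in the subprofile indexed by `I` accepting `φ`. -/
def NaccI {n : ℕ} (P : Fin n → Finset Φ) (I : Finset (Fin n)) (φ : Φ) : ℕ :=
  (I.filter fun i => φ ∈ P i).card

/-- Majoritarian set of the subprofile of `P` indexed by `I`. -/
def majI (A : Finset Φ) {n : ℕ} (P : Fin n → Finset Φ) (I : Finset (Fin n)) : Finset Φ :=
  A.filter fun φ => I.card < 2 * NaccI P I φ

/-- The Young rule: rational extensions of `m(Q)` for maximum-cardinality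
majority-consistent subprofiles `Q` of `P`. -/
def Young (A : Finset Φ) (neg : Φ → Φ) (Cons : Finset Φ → Prop) {n : ℕ}
    (P : Fin n → Finset Φ) : Set (Finset Φ) :=
  {J | ∃ I : Finset (Fin n), Cons (majI A P I) ∧
      (∀ I' : Finset (Fin n), Cons (majI A P I') → I'.card ≤ I.card) ∧
      J ∈ extSet A neg Cons (majI A P I)}

/-- The minimal-profile-change rule: rational extensions of `m(Q)` for majority-consistent
rational profiles `Q` minimizing the summed Hamming distance to `P`. -/
def MPC (A : Finset Φ) (neg : Φ → Φ) (Cons : Finset Φ → Prop) {n : ℕ}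
    (P : Fin n → Finset Φ) : Set (Finset Φ) :=
  {J | ∃ Q : Fin n → Finset Φ, (∀ i, Rational A neg Cons (Q i)) ∧ Cons (maj A Q) ∧
      (∀ Q' : Fin n → Finset Φ, (∀ i, Rational A neg Cons (Q' i)) → Cons (maj A Q') →
        ∑ i, (P i \ Q i).card ≤ ∑ i, (P i \ Q' i).card) ∧
      J ∈ extSet A neg Cons (maj A Q)}


/-! If `m(P)` is consistent, it is its own unique maximal and maximum-cardinality consistent
subset, the whole profile is the largest majority-consistent subprofile, and `P` itself is the
unique rational profile at distance `0` from `P`. For the median and ranked-agenda rules the point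
is that in a rational profile `N(P,φ) + N(P,¬φ) = n`, so a rational extension `J` of `m(P)`
contains, of each pair `φ, ¬φ`, one with weakly larger support. Passing from `J` to another
rational set `K` replaces `J \ K` by its negations, which cannot raise the median score and
strictly lowers it if an element of `m(P)` is lost. Along an agenda order of non-increasing
support, the greedy procedure meets the elements of `m(P)` first and, `m(P)` being consistent,
keeps them all; conversely, listing `J` before the rest of the agenda is such an order, and along
it the greedy procedure returns exactly `J`. -/

open Finset

lemma Rational.neg_mem_of_notMem {α : Type*} {A J : Finset α} {neg : α → α}
    {Cons : Finset α → Prop} {φ : α} (hJ : Rational A neg Cons J) (hφ : φ ∈ A) (hφJ : φ ∉ J) :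
    neg φ ∈ J :=
  (hJ.2.1 φ hφ).resolve_left hφJ

lemma Rational.neg_notMem {α : Type*} {A J : Finset α} {neg : α → α} {Cons : Finset α → Prop}
    {φ : α} (hnotboth : ∀ S : Finset α, Cons S → ∀ φ ∈ A, φ ∈ S → neg φ ∉ S)
    (hJ : Rational A neg Cons J) (hφJ : φ ∈ J) : neg φ ∉ J :=
  hnotboth J hJ.2.2 φ (hJ.1 hφJ) hφJ

section Rational

variable {A : Finset Φ} {neg : Φ → Φ} {Cons : Finset Φ → Prop} {J K : Finset Φ} {φ : Φ}

lemma Rational.eq_of_subset (hnotboth : ∀ S : Finset Φ, Cons S → ∀ φ ∈ A, φ ∈ S → neg φ ∉ S)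
    (hJ : Rational A neg Cons J) (hK : Rational A neg Cons K) (hJK : J ⊆ K) : J = K := by
  refine hJK.antisymm fun φ hφK => ?_
  by_contra hφJ
  exact hK.neg_notMem hnotboth hφK (hJK (hJ.neg_mem_of_notMem (hK.1 hφK) hφJ))

lemma Rational.neg_mem_sdiff (hnotboth : ∀ S : Finset Φ, Cons S → ∀ φ ∈ A, φ ∈ S → neg φ ∉ S)
    (hJ : Rational A neg Cons J) (hK : Rational A neg Cons K) (hφ : φ ∈ J \ K) :
    neg φ ∈ K \ J := by
  rw [mem_sdiff] at hφ ⊢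
  exact ⟨hK.neg_mem_of_notMem (hJ.1 hφ.1) hφ.2, hJ.neg_notMem hnotboth hφ.1⟩

lemma Rational.sum_sdiff_eq_sum_sdiff_neg {M : Type*} [AddCommMonoid M] (f : Φ → M)
    (hnotboth : ∀ S : Finset Φ, Cons S → ∀ φ ∈ A, φ ∈ S → neg φ ∉ S)
    (hneg_neg : ∀ φ ∈ A, neg (neg φ) = φ)
    (hJ : Rational A neg Cons J) (hK : Rational A neg Cons K) :
    ∑ φ ∈ J \ K, f φ = ∑ φ ∈ K \ J, f (neg φ) :=
  sum_bij' (fun φ _ => neg φ) (fun φ _ => neg φ)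
    (fun _ hφ => hJ.neg_mem_sdiff hnotboth hK hφ) (fun _ hφ => hK.neg_mem_sdiff hnotboth hJ hφ)
    (fun φ hφ => hneg_neg φ (hJ.1 (mem_sdiff.1 hφ).1))
    (fun φ hφ => hneg_neg φ (hK.1 (mem_sdiff.1 hφ).1))
    (fun φ hφ => by rw [hneg_neg φ (hJ.1 (mem_sdiff.1 hφ).1)])

end Rational

section Majority

variable {A : Finset Φ} {neg : Φ → Φ} {Cons : Finset Φ → Prop} {n : ℕ}
  {P : Fin n → Finset Φ} {J K : Finset Φ} {φ : Φ}

lemma Nacc_add_Nacc_neg (hnotboth : ∀ S : Finset Φ, Cons S → ∀ φ ∈ A, φ ∈ S → neg φ ∉ S)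
    (hP : ∀ i, Rational A neg Cons (P i)) (hφ : φ ∈ A) :
    Nacc P φ + Nacc P (neg φ) = n := by
  have hneg : ∀ i, neg φ ∈ P i ↔ φ ∉ P i := fun i =>
    ⟨fun h hφi => (hP i).neg_notMem hnotboth hφi h, (hP i).neg_mem_of_notMem hφ⟩
  simp only [Nacc, hneg]
  simpa using card_filter_add_card_filter_not (s := univ) (fun i => φ ∈ P i)

lemma le_two_mul_Nacc_of_mem (hA_neg : ∀ φ ∈ A, neg φ ∈ A)
    (hnotboth : ∀ S : Finset Φ, Cons S → ∀ φ ∈ A, φ ∈ S → neg φ ∉ S)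
    (hP : ∀ i, Rational A neg Cons (P i)) (hJ : J ∈ extSet A neg Cons (maj A P))
    (hφJ : φ ∈ J) : n ≤ 2 * Nacc P φ := by
  have hφ := hJ.1.1 hφJ
  have hsum := Nacc_add_Nacc_neg hnotboth hP hφ
  by_contra hlt
  have hneg : neg φ ∈ maj A P := mem_filter.2 ⟨hA_neg φ hφ, by omega⟩
  exact hJ.1.neg_notMem hnotboth hφJ (hJ.2 hneg)

lemma two_mul_Nacc_le_of_notMem (hA_neg : ∀ φ ∈ A, neg φ ∈ A)
    (hnotboth : ∀ S : Finset Φ, Cons S → ∀ φ ∈ A, φ ∈ S → neg φ ∉ S)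
    (hP : ∀ i, Rational A neg Cons (P i)) (hJ : J ∈ extSet A neg Cons (maj A P))
    (hφ : φ ∈ A) (hφJ : φ ∉ J) : 2 * Nacc P φ ≤ n := by
  have := le_two_mul_Nacc_of_mem hA_neg hnotboth hP hJ (hJ.1.neg_mem_of_notMem hφ hφJ)
  have := Nacc_add_Nacc_neg hnotboth hP hφ
  omega

lemma Nacc_neg_le_of_mem (hA_neg : ∀ φ ∈ A, neg φ ∈ A)
    (hnotboth : ∀ S : Finset Φ, Cons S → ∀ φ ∈ A, φ ∈ S → neg φ ∉ S)
    (hP : ∀ i, Rational A neg Cons (P i)) (hJ : J ∈ extSet A neg Cons (maj A P))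
    (hφJ : φ ∈ J) : Nacc P (neg φ) ≤ Nacc P φ := by
  have := le_two_mul_Nacc_of_mem hA_neg hnotboth hP hJ hφJ
  have := Nacc_add_Nacc_neg hnotboth hP (hJ.1.1 hφJ)
  omega

lemma sum_Nacc_le_of_mem_extSet (hA_neg : ∀ φ ∈ A, neg φ ∈ A)
    (hneg_neg : ∀ φ ∈ A, neg (neg φ) = φ)
    (hnotboth : ∀ S : Finset Φ, Cons S → ∀ φ ∈ A, φ ∈ S → neg φ ∉ S)
    (hP : ∀ i, Rational A neg Cons (P i)) (hJ : J ∈ extSet A neg Cons (maj A P))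
    (hK : Rational A neg Cons K) : ∑ φ ∈ K, Nacc P φ ≤ ∑ φ ∈ J, Nacc P φ := by
  rw [← sum_sdiff_le_sum_sdiff, hK.sum_sdiff_eq_sum_sdiff_neg _ hnotboth hneg_neg hJ.1]
  exact sum_le_sum fun φ hφ => Nacc_neg_le_of_mem hA_neg hnotboth hP hJ (mem_sdiff.1 hφ).1

lemma maj_subset_of_sum_Nacc_le (hA_neg : ∀ φ ∈ A, neg φ ∈ A)
    (hneg_neg : ∀ φ ∈ A, neg (neg φ) = φ)
    (hnotboth : ∀ S : Finset Φ, Cons S → ∀ φ ∈ A, φ ∈ S → neg φ ∉ S)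
    (hP : ∀ i, Rational A neg Cons (P i)) (hJ : J ∈ extSet A neg Cons (maj A P))
    (hK : Rational A neg Cons K) (hJK : ∑ φ ∈ J, Nacc P φ ≤ ∑ φ ∈ K, Nacc P φ) :
    maj A P ⊆ K := by
  intro φ hφ
  by_contra hφK
  refine hJK.not_gt ?_
  rw [← sum_sdiff_lt_sum_sdiff, hK.sum_sdiff_eq_sum_sdiff_neg _ hnotboth hneg_neg hJ.1]
  refine sum_lt_sum (fun ψ hψ => Nacc_neg_le_of_mem hA_neg hnotboth hP hJ (mem_sdiff.1 hψ).1)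
    ⟨φ, mem_sdiff.2 ⟨hJ.2 hφ, hφK⟩, ?_⟩
  have := (mem_filter.1 hφ).2
  have := Nacc_add_Nacc_neg hnotboth hP (hJ.1.1 (hJ.2 hφ))
  omega

lemma majI_univ (A : Finset Φ) (P : Fin n → Finset Φ) : majI A P univ = maj A P := by
  ext φ
  rw [majI, maj, mem_filter, mem_filter, card_univ, Fintype.card_fin]
  rfl

end Majority

section Greedy

variable {Cons : Finset Φ → Prop} {l : List Φ} {S M : Finset Φ} {φ : Φ}

lemma subset_greedy (l : List Φ) (S : Finset Φ) : S ⊆ greedy Cons l S := by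
  induction l generalizing S with
  | nil => exact subset_rfl
  | cons ψ t ih =>
    rw [greedy]
    split
    · exact (subset_insert ψ S).trans (ih _)
    · exact ih S

lemma greedy_subset (l : List Φ) (S : Finset Φ) : greedy Cons l S ⊆ l.toFinset ∪ S := by
  induction l generalizing S with
  | nil => simp [greedy]
  | cons ψ t ih =>
    rw [greedy, List.toFinset_cons]
    split
    · exact (ih _).trans (by grind)
    · exact (ih S).trans (by grind)

lemma greedy_consistent (l : List Φ) (hS : Cons S) : Cons (greedy Cons l S) := by
  induction l generalizing S with
  | nil => exact hS
  | cons ψ t ih =>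
    rw [greedy]
    split
    · exact ih ‹_›
    · exact ih hS

lemma greedy_append (l₁ l₂ : List Φ) (S : Finset Φ) :
    greedy Cons (l₁ ++ l₂) S = greedy Cons l₂ (greedy Cons l₁ S) := by
  induction l₁ generalizing S with
  | nil => rfl
  | cons ψ t ih =>
    rw [List.cons_append, greedy, greedy]
    split <;> exact ih _

lemma not_consistent_insert_greedy (hmono : ∀ S T : Finset Φ, S ⊆ T → Cons T → Cons S)
    (hφ : φ ∈ l) (hφG : φ ∉ greedy Cons l S) : ¬ Cons (insert φ (greedy Cons l S)) := by
  induction l generalizing S with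
  | nil => simp at hφ
  | cons ψ t ih =>
    rw [greedy] at hφG ⊢
    by_cases hψ : Cons (insert ψ S)
    · rw [if_pos hψ] at hφG ⊢
      obtain rfl | hφt := List.mem_cons.1 hφ
      · exact absurd (subset_greedy t _ (mem_insert_self φ S)) hφG
      · exact ih hφt hφG
    · rw [if_neg hψ] at hφG ⊢
      obtain rfl | hφt := List.mem_cons.1 hφ
      · exact fun hc => hψ (hmono _ _ (insert_subset_insert φ (subset_greedy t S)) hc)
      · exact ih hφt hφG

lemma greedy_eq_union (hmono : ∀ S T : Finset Φ, S ⊆ T → Cons T → Cons S)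
    (hM : Cons M) (hl : ∀ φ ∈ l, φ ∈ M) (hS : S ⊆ M) : greedy Cons l S = S ∪ l.toFinset := by
  induction l generalizing S with
  | nil => simp [greedy]
  | cons ψ t ih =>
    have hψS : insert ψ S ⊆ M := insert_subset (hl ψ List.mem_cons_self) hS
    rw [greedy, if_pos (hmono _ _ hψS hM),
      ih (fun φ hφ => hl φ (List.mem_cons_of_mem ψ hφ)) hψS, List.toFinset_cons]
    grind

lemma greedy_eq_self (hl : ∀ φ ∈ l, ¬ Cons (insert φ S)) : greedy Cons l S = S := by
  induction l with
  | nil => rfl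
  | cons ψ t ih =>
    rw [greedy, if_neg (hl ψ List.mem_cons_self)]
    exact ih fun φ hφ => hl φ (List.mem_cons_of_mem ψ hφ)

lemma mem_greedy_of_pairwise (hmono : ∀ S T : Finset Φ, S ⊆ T → Cons T → Cons S)
    (hM : Cons M) (hl : l.Pairwise fun a b => b ∈ M → a ∈ M) (hS : S ⊆ M)
    (hφ : φ ∈ l) (hφM : φ ∈ M) : φ ∈ greedy Cons l S := by
  induction l generalizing S with
  | nil => simp at hφ
  | cons ψ t ih =>
    obtain ⟨hψt, ht⟩ := List.pairwise_cons.1 hl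
    have hψM : ψ ∈ M := by
      obtain rfl | hφt := List.mem_cons.1 hφ
      exacts [hφM, hψt φ hφt hφM]
    have hψS : insert ψ S ⊆ M := insert_subset hψM hS
    rw [greedy, if_pos (hmono _ _ hψS hM)]
    obtain rfl | hφt := List.mem_cons.1 hφ
    · exact subset_greedy t _ (mem_insert_self φ S)
    · exact ih ht hψS hφt

/-- A rational extension of the greedy output cannot contain an element whose insertion greedy
rejected, so it is the output itself. -/
lemma rational_greedy {A : Finset Φ} {neg : Φ → Φ}
    (hmono : ∀ S T : Finset Φ, S ⊆ T → Cons T → Cons S)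
    (hext : ∀ S : Finset Φ, S ⊆ A → Cons S → ∃ J, Rational A neg Cons J ∧ S ⊆ J)
    (hl : ∀ φ, φ ∈ l ↔ φ ∈ A) (hSA : S ⊆ A) (hS : Cons S) :
    Rational A neg Cons (greedy Cons l S) := by
  have hGA : greedy Cons l S ⊆ A := fun x hx => by
    rcases mem_union.1 (greedy_subset l S hx) with h | h
    exacts [(hl x).1 (List.mem_toFinset.1 h), hSA h]
  obtain ⟨K, hK, hGK⟩ := hext _ hGA (greedy_consistent l hS)
  have hKG : K ⊆ greedy Cons l S := fun ψ hψK => by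
    by_contra hψG
    exact not_consistent_insert_greedy hmono ((hl ψ).2 (hK.1 hψK)) hψG
      (hmono _ _ (insert_subset hψK hGK) hK.2.2)
  rwa [hGK.antisymm hKG]

end Greedy

lemma exists_nodup_pairwise_ge {α β : Type*} [LinearOrder β] (s : Finset α) (f : α → β) :
    ∃ l : List α, l.Nodup ∧ (∀ x, x ∈ l ↔ x ∈ s) ∧ l.Pairwise fun a b => f b ≤ f a := by
  classical
  let r : α → α → Prop := fun a b => f b ≤ f a
  have : Std.Total r := ⟨fun a b => le_total (f b) (f a)⟩
  have : IsTrans α r := ⟨fun _ _ _ hab hbc => hbc.trans hab⟩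
  exact ⟨s.toList.insertionSort r, (List.perm_insertionSort r _).nodup_iff.2 s.nodup_toList,
    fun x => by rw [List.mem_insertionSort, mem_toList], List.pairwise_insertionSort r _⟩

section Rules

variable {A : Finset Φ} {neg : Φ → Φ} {Cons : Finset Φ → Prop} {n : ℕ} {P : Fin n → Finset Φ}

theorem MC_eq_extSet (hcons : Cons (maj A P)) :
    MC A neg Cons P = extSet A neg Cons (maj A P) := by
  ext J
  constructor
  · rintro ⟨hJ, S, hSm, -, hSmax, hSJ⟩
    rw [← hSmax _ hSm subset_rfl hcons] at hSJ
    exact ⟨hJ, hSJ⟩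
  · rintro ⟨hJ, hmJ⟩
    exact ⟨hJ, maj A P, subset_rfl, hcons, fun T hT hTm _ => hTm.antisymm hT, hmJ⟩

theorem MCC_eq_extSet (hcons : Cons (maj A P)) :
    MCC A neg Cons P = extSet A neg Cons (maj A P) := by
  ext J
  constructor
  · rintro ⟨hJ, S, hSm, -, hSmax, hSJ⟩
    rw [eq_of_subset_of_card_le hSm (hSmax _ subset_rfl hcons)] at hSJ
    exact ⟨hJ, hSJ⟩
  · rintro ⟨hJ, hmJ⟩
    exact ⟨hJ, maj A P, subset_rfl, hcons, fun T hT _ => card_le_card hT, hmJ⟩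

theorem MED_eq_extSet (hA_neg : ∀ φ ∈ A, neg φ ∈ A) (hneg_neg : ∀ φ ∈ A, neg (neg φ) = φ)
    (hnotboth : ∀ S : Finset Φ, Cons S → ∀ φ ∈ A, φ ∈ S → neg φ ∉ S)
    (hext : ∀ S : Finset Φ, S ⊆ A → Cons S → ∃ J, Rational A neg Cons J ∧ S ⊆ J)
    (hP : ∀ i, Rational A neg Cons (P i)) (hcons : Cons (maj A P)) :
    MED A neg Cons P = extSet A neg Cons (maj A P) := by
  obtain ⟨J₀, hJ₀⟩ := hext (maj A P) (filter_subset _ _) hcons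
  ext J
  exact ⟨fun ⟨hJ, hmax⟩ =>
      ⟨hJ, maj_subset_of_sum_Nacc_le hA_neg hneg_neg hnotboth hP hJ₀ hJ (hmax J₀ hJ₀.1)⟩,
    fun hJ => ⟨hJ.1, fun K hK => sum_Nacc_le_of_mem_extSet hA_neg hneg_neg hnotboth hP hJ hK⟩⟩

lemma greedy_mem_extSet (hmono : ∀ S T : Finset Φ, S ⊆ T → Cons T → Cons S)
    (hext : ∀ S : Finset Φ, S ⊆ A → Cons S → ∃ J, Rational A neg Cons J ∧ S ⊆ J)
    (hcons : Cons (maj A P)) {l : List Φ} (hl : ∀ φ, φ ∈ l ↔ φ ∈ A)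
    (hsort : l.Pairwise fun a b => Nacc P b ≤ Nacc P a) :
    greedy Cons l ∅ ∈ extSet A neg Cons (maj A P) := by
  refine ⟨rational_greedy hmono hext hl (empty_subset A) (hmono _ _ (empty_subset _) hcons),
    fun φ hφ => ?_⟩
  have hl_maj : l.Pairwise fun a b => b ∈ maj A P → a ∈ maj A P :=
    hsort.imp_of_mem fun ha _ hab hb =>
      mem_filter.2 ⟨(hl _).1 ha, (mem_filter.1 hb).2.trans_le (by omega)⟩
  exact mem_greedy_of_pairwise hmono hcons hl_maj (empty_subset _)
    ((hl φ).2 (mem_filter.1 hφ).1) hφ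

lemma mem_RA_of_mem_extSet (hA_neg : ∀ φ ∈ A, neg φ ∈ A)
    (hnotboth : ∀ S : Finset Φ, Cons S → ∀ φ ∈ A, φ ∈ S → neg φ ∉ S)
    (hmono : ∀ S T : Finset Φ, S ⊆ T → Cons T → Cons S)
    (hP : ∀ i, Rational A neg Cons (P i)) {J : Finset Φ}
    (hJ : J ∈ extSet A neg Cons (maj A P)) : J ∈ RA A Cons P := by
  obtain ⟨l₁, hnd₁, hl₁, hs₁⟩ := exists_nodup_pairwise_ge J (Nacc P)
  obtain ⟨l₂, hnd₂, hl₂, hs₂⟩ := exists_nodup_pairwise_ge (A \ J) (Nacc P)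
  refine ⟨l₁ ++ l₂, hnd₁.append hnd₂ fun a ha hb => (mem_sdiff.1 ((hl₂ a).1 hb)).2 ((hl₁ a).1 ha),
    fun φ => ?_, List.pairwise_append.2 ⟨hs₁, hs₂, fun a ha b hb => ?_⟩, ?_⟩
  · rw [List.mem_append, hl₁, hl₂, mem_sdiff]
    have := @hJ.1.1 φ
    tauto
  · have := le_two_mul_Nacc_of_mem hA_neg hnotboth hP hJ ((hl₁ a).1 ha)
    obtain ⟨hbA, hbJ⟩ := mem_sdiff.1 ((hl₂ b).1 hb)
    have := two_mul_Nacc_le_of_notMem hA_neg hnotboth hP hJ hbA hbJ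
    omega
  · have hJ₁ : greedy Cons l₁ ∅ = J := by
      rw [greedy_eq_union hmono hJ.1.2.2 (fun φ hφ => (hl₁ φ).1 hφ) (empty_subset J), empty_union]
      ext
      simp [hl₁]
    rw [greedy_append, hJ₁, greedy_eq_self]
    intro φ hφ hc
    obtain ⟨hφA, hφJ⟩ := mem_sdiff.1 ((hl₂ φ).1 hφ)
    exact hnotboth _ hc φ hφA (mem_insert_self φ J)
      (mem_insert_of_mem (hJ.1.neg_mem_of_notMem hφA hφJ))

theorem RA_eq_extSet (hA_neg : ∀ φ ∈ A, neg φ ∈ A)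
    (hnotboth : ∀ S : Finset Φ, Cons S → ∀ φ ∈ A, φ ∈ S → neg φ ∉ S)
    (hmono : ∀ S T : Finset Φ, S ⊆ T → Cons T → Cons S)
    (hext : ∀ S : Finset Φ, S ⊆ A → Cons S → ∃ J, Rational A neg Cons J ∧ S ⊆ J)
    (hP : ∀ i, Rational A neg Cons (P i)) (hcons : Cons (maj A P)) :
    RA A Cons P = extSet A neg Cons (maj A P) := by
  ext J
  constructor
  · rintro ⟨l, -, hl, hsort, rfl⟩
    exact greedy_mem_extSet hmono hext hcons hl hsort
  · exact mem_RA_of_mem_extSet hA_neg hnotboth hmono hP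

theorem Young_eq_extSet (hcons : Cons (maj A P)) :
    Young A neg Cons P = extSet A neg Cons (maj A P) := by
  have hcons_univ : Cons (majI A P univ) := by rwa [majI_univ]
  ext J
  constructor
  · rintro ⟨I, -, hImax, hJ⟩
    have hI : I = univ :=
      eq_univ_of_card I ((card_le_univ I).antisymm (by simpa using hImax univ hcons_univ))
    rwa [hI, majI_univ] at hJ
  · intro hJ
    exact ⟨univ, hcons_univ, fun I _ => card_le_univ I, by rwa [majI_univ]⟩

theorem MPC_eq_extSet (hnotboth : ∀ S : Finset Φ, Cons S → ∀ φ ∈ A, φ ∈ S → neg φ ∉ S)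
    (hP : ∀ i, Rational A neg Cons (P i)) (hcons : Cons (maj A P)) :
    MPC A neg Cons P = extSet A neg Cons (maj A P) := by
  ext J
  constructor
  · rintro ⟨Q, hQ, -, hQmin, hJ⟩
    have hPQ : ∀ i, P i ⊆ Q i := by simpa [sum_eq_zero_iff] using hQmin P hP hcons
    have hQP : Q = P := funext fun i => ((hP i).eq_of_subset hnotboth (hQ i) (hPQ i)).symm
    rwa [hQP] at hJ
  · intro hJ
    exact ⟨P, hP, hcons, fun Q' _ _ => by simp, hJ⟩

end Rules

theorem six_rules_majority_preserving_general
    (A : Finset Φ) (neg : Φ → Φ) (Cons : Finset Φ → Prop)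
    (hA_neg : ∀ φ ∈ A, neg φ ∈ A)
    (hneg_neg : ∀ φ ∈ A, neg (neg φ) = φ)
    (hnotboth : ∀ S : Finset Φ, Cons S → ∀ φ ∈ A, φ ∈ S → neg φ ∉ S)
    (hmono : ∀ S T : Finset Φ, S ⊆ T → Cons T → Cons S)
    (hext : ∀ S : Finset Φ, S ⊆ A → Cons S → ∃ J, Rational A neg Cons J ∧ S ⊆ J)
    {n : ℕ} (P : Fin n → Finset Φ) (hP : ∀ i, Rational A neg Cons (P i))
    (hcons : Cons (maj A P)) :
    MC A neg Cons P = extSet A neg Cons (maj A P) ∧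
    MCC A neg Cons P = extSet A neg Cons (maj A P) ∧
    MED A neg Cons P = extSet A neg Cons (maj A P) ∧
    RA A Cons P = extSet A neg Cons (maj A P) ∧
    Young A neg Cons P = extSet A neg Cons (maj A P) ∧
    MPC A neg Cons P = extSet A neg Cons (maj A P) :=
  ⟨MC_eq_extSet hcons, MCC_eq_extSet hcons, MED_eq_extSet hA_neg hneg_neg hnotboth hext hP hcons,
    RA_eq_extSet hA_neg hnotboth hmono hext hP hcons, Young_eq_extSet hcons,
    MPC_eq_extSet hnotboth hP hcons⟩

/-- the rules MC, MCC, MED, RA, Young and MPC are majority-preserving: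
whenever `m(P)` is consistent, each rule outputs exactly the rational extensions of `m(P)`. -/
theorem six_rules_majority_preserving
    (A : Finset Φ) (neg : Φ → Φ) (Cons : Finset Φ → Prop)
    (hA_neg : ∀ φ ∈ A, neg φ ∈ A)
    (hneg_ne : ∀ φ ∈ A, neg φ ≠ φ)
    (hneg_neg : ∀ φ ∈ A, neg (neg φ) = φ)
    (hnotboth : ∀ S : Finset Φ, Cons S → ∀ φ ∈ A, φ ∈ S → neg φ ∉ S)
    (hmono : ∀ S T : Finset Φ, S ⊆ T → Cons T → Cons S)
    (hext : ∀ S : Finset Φ, S ⊆ A → Cons S → ∃ J, Rational A neg Cons J ∧ S ⊆ J)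
    {n : ℕ} (P : Fin n → Finset Φ) (hP : ∀ i, Rational A neg Cons (P i))
    (hcons : Cons (maj A P)) :
    MC A neg Cons P = extSet A neg Cons (maj A P) ∧
    MCC A neg Cons P = extSet A neg Cons (maj A P) ∧
    MED A neg Cons P = extSet A neg Cons (maj A P) ∧
    RA A Cons P = extSet A neg Cons (maj A P) ∧
    Young A neg Cons P = extSet A neg Cons (maj A P) ∧
    MPC A neg Cons P = extSet A neg Cons (maj A P) :=
  six_rules_majority_preserving_general A neg Cons hA_neg hneg_neg hnotboth hmono hext P hP hcons
end

section
/- If a pseudo-distance d is non-degenerate (there exist J, J', J'' with d(J,J'') > max(d(J,J'), d(J',J''))), then F^{d,max} is not even weakly majority-preserving: there is a majority-consistent profile P with ext(m(P)) not contained in F^{d,max}(P). -/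
open scoped NNReal

variable {Φ : Type*} [DecidableEq Φ]

/-- The max-distance rule `F^{d,max}`. -/
def Fmax (A : Finset Φ) (neg : Φ → Φ) (Cons : Finset Φ → Prop)
    (d : Finset Φ → Finset Φ → ℝ≥0) {n : ℕ} (P : Fin n → Finset Φ) : Set (Finset Φ) :=
  {J | Rational A neg Cons J ∧ ∀ J', Rational A neg Cons J' →
      (Finset.univ.sup fun i => d J (P i)) ≤ Finset.univ.sup fun i => d J' (P i)}

/-! In the profile `⟨J₁, J₂, J₃, J₃, J₃⟩` the three copies of `J₃` form a majority, so
`m(P) = J₃` is rational and `J₃ ∈ ext(m(P))`. The max-distance of `J₃` to the profile is at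
least `d(J₁, J₃)`, while that of `J₂` is at most `max (d(J₁, J₂), d(J₂, J₃))` by symmetry and
`d(J₂, J₂) = 0`; non-degeneracy makes the latter strictly smaller, so `J₃ ∉ F^{d,max}(P)`. -/

open Finset

section

variable {A : Finset Φ} {neg : Φ → Φ} {Cons : Finset Φ → Prop}

theorem maj_eq_of_lt_two_mul_card {n : ℕ} {P : Fin n → Finset Φ} {J : Finset Φ}
    (hJ : J ⊆ A) (s : Finset (Fin n)) (hs : n < 2 * #s) (hP : ∀ i ∈ s, P i = J) :
    maj A P = J := by
  ext φ
  rw [maj, mem_filter, Nacc]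
  by_cases hφ : φ ∈ J
  · have hle : #s ≤ #(univ.filter fun i => φ ∈ P i) :=
      card_le_card fun i hi => mem_filter.2 ⟨mem_univ i, hP i hi ▸ hφ⟩
    exact iff_of_true ⟨hJ hφ, by omega⟩ hφ
  · have hsub : (univ.filter fun i => φ ∈ P i) ⊆ sᶜ := fun i hi =>
      mem_compl.2 fun his => hφ (hP i his ▸ (mem_filter.1 hi).2)
    have hle := card_le_card hsub
    rw [card_compl, Fintype.card_fin] at hle
    have hsn : #s ≤ n := by simpa using card_le_univ s
    exact iff_of_false (fun h => by omega) hφ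

omit [DecidableEq Φ] in
theorem not_extSet_subset_Fmax_of_lt {d : Finset Φ → Finset Φ → ℝ≥0} {n : ℕ}
    {P : Fin n → Finset Φ} {S J J' : Finset Φ} (hJ : J ∈ extSet A neg Cons S)
    (hJ' : Rational A neg Cons J')
    (hlt : (univ.sup fun i => d J' (P i)) < univ.sup fun i => d J (P i)) :
    ¬ extSet A neg Cons S ⊆ Fmax A neg Cons d P :=
  fun hsub => (hsub hJ).2 J' hJ' |>.not_gt hlt

end

theorem fmax_not_weakly_majority_preserving_general
    (A : Finset Φ) (neg : Φ → Φ) (Cons : Finset Φ → Prop)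
    (d : Finset Φ → Finset Φ → ℝ≥0)
    (hsymm : ∀ J J', Rational A neg Cons J → Rational A neg Cons J' → d J J' = d J' J)
    (hzero : ∀ J J', Rational A neg Cons J → Rational A neg Cons J' → (d J J' = 0 ↔ J = J'))
    (hnondeg : ∃ J J' J'', Rational A neg Cons J ∧ Rational A neg Cons J' ∧
      Rational A neg Cons J'' ∧ max (d J J') (d J' J'') < d J J'') :
    ∃ (n : ℕ) (P : Fin n → Finset Φ), (∀ i, Rational A neg Cons (P i)) ∧
      Cons (maj A P) ∧ ¬ extSet A neg Cons (maj A P) ⊆ Fmax A neg Cons d P := by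
  obtain ⟨J₁, J₂, J₃, h₁, h₂, h₃, hlt⟩ := hnondeg
  set P : Fin 5 → Finset Φ := ![J₁, J₂, J₃, J₃, J₃]
  have hmaj : maj A P = J₃ :=
    maj_eq_of_lt_two_mul_card h₃.1 {2, 3, 4} (by decide) (by simp [P])
  refine ⟨5, P, fun i => by fin_cases i <;> assumption, hmaj ▸ h₃.2.2, ?_⟩
  refine not_extSet_subset_Fmax_of_lt (J := J₃) (J' := J₂)
    (by rw [hmaj]; exact ⟨h₃, subset_rfl⟩) h₂ ?_
  calc (univ.sup fun i => d J₂ (P i)) ≤ max (d J₁ J₂) (d J₂ J₃) := by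
        refine Finset.sup_le fun i _ => ?_
        fin_cases i
        · exact (hsymm J₂ J₁ h₂ h₁).trans_le (le_max_left _ _)
        · exact ((hzero J₂ J₂ h₂ h₂).2 rfl).trans_le zero_le
        all_goals exact le_max_right _ _
    _ < d J₁ J₃ := hlt
    _ ≤ univ.sup fun i => d J₃ (P i) :=
        hsymm J₁ J₃ h₁ h₃ ▸ le_sup (f := fun i => d J₃ (P i)) (mem_univ 0)

/-- if the pseudo-distance `d` is non-degenerate, then `F^{d,max}` is not even
weakly majority-preserving: there is a majority-consistent profile `P` with
`ext(m(P)) ⊄ F^{d,max}(P)`. -/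
theorem fmax_not_weakly_majority_preserving
    (A : Finset Φ) (neg : Φ → Φ) (Cons : Finset Φ → Prop)
    (hA_neg : ∀ φ ∈ A, neg φ ∈ A)
    (hneg_ne : ∀ φ ∈ A, neg φ ≠ φ)
    (hneg_neg : ∀ φ ∈ A, neg (neg φ) = φ)
    (hnotboth : ∀ S : Finset Φ, Cons S → ∀ φ ∈ A, φ ∈ S → neg φ ∉ S)
    (hmono : ∀ S T : Finset Φ, S ⊆ T → Cons T → Cons S)
    (d : Finset Φ → Finset Φ → ℝ≥0)
    (hsymm : ∀ J J', Rational A neg Cons J → Rational A neg Cons J' → d J J' = d J' J)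
    (hzero : ∀ J J', Rational A neg Cons J → Rational A neg Cons J' → (d J J' = 0 ↔ J = J'))
    (hnondeg : ∃ J J' J'', Rational A neg Cons J ∧ Rational A neg Cons J' ∧
      Rational A neg Cons J'' ∧ max (d J J') (d J' J'') < d J J'') :
    ∃ (n : ℕ) (P : Fin n → Finset Φ), (∀ i, Rational A neg Cons (P i)) ∧
      Cons (maj A P) ∧ ¬ extSet A neg Cons (maj A P) ⊆ Fmax A neg Cons d P :=
  fmax_not_weakly_majority_preserving_general A neg Cons d hsymm hzero hnondeg
end

section
/- The MC rule satisfies weak unanimity: if every judgment set in profile P contains φ, then some judgment set in MC(P) contains φ. -/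
open scoped NNReal

variable {Φ : Type*} [DecidableEq Φ]

theorem exists_maximal_superset_of_subset {α : Type*} {p : Finset α → Prop} {M S₀ : Finset α}
    (hS₀M : S₀ ⊆ M) (hS₀ : p S₀) :
    ∃ S, S₀ ⊆ S ∧ S ⊆ M ∧ p S ∧ ∀ T, S ⊆ T → T ⊆ M → p T → T = S := by
  have hfin : {S : Finset α | S ⊆ M ∧ p S}.Finite :=
    M.powerset.finite_toSet.subset fun S hS => by simpa using hS.1
  obtain ⟨S, hS₀S, hSmax⟩ := hfin.exists_le_maximal ⟨hS₀M, hS₀⟩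
  exact ⟨S, hS₀S, hSmax.prop.1, hSmax.prop.2,
    fun T hST hTM hT => (hSmax.eq_of_le ⟨hTM, hT⟩ hST).symm⟩

theorem mem_maj_of_forall_mem {A : Finset Φ} {n : ℕ} (hn : 0 < n) {P : Fin n → Finset Φ}
    {φ : Φ} (hφ : φ ∈ A) (huna : ∀ i, φ ∈ P i) : φ ∈ maj A P := by
  have hN : Nacc P φ = n := by simp [Nacc, huna]
  exact Finset.mem_filter.2 ⟨hφ, by omega⟩

/-- MC satisfies weak unanimity: if every voter accepts `φ`,
then some judgment set in `MC(P)` contains `φ`. -/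
theorem mc_weak_unanimity
    (A : Finset Φ) (neg : Φ → Φ) (Cons : Finset Φ → Prop)
    (hmono : ∀ S T : Finset Φ, S ⊆ T → Cons T → Cons S)
    (hext : ∀ S : Finset Φ, S ⊆ A → Cons S → ∃ J, Rational A neg Cons J ∧ S ⊆ J)
    {n : ℕ} (hn : 0 < n) (P : Fin n → Finset Φ) (hP : ∀ i, Rational A neg Cons (P i))
    (φ : Φ) (hφ : φ ∈ A) (huna : ∀ i, φ ∈ P i) :
    ∃ J ∈ MC A neg Cons P, φ ∈ J := by
  have hφmaj : φ ∈ maj A P := mem_maj_of_forall_mem hn hφ huna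
  have hcons : Cons {φ} :=
    hmono _ (P ⟨0, hn⟩) (Finset.singleton_subset_iff.2 (huna _)) (hP _).2.2
  obtain ⟨S, hφS, hSmaj, hScons, hSmax⟩ :=
    exists_maximal_superset_of_subset (Finset.singleton_subset_iff.2 hφmaj) hcons
  obtain ⟨J, hJ, hSJ⟩ := hext S (hSmaj.trans (Finset.filter_subset _ _)) hScons
  exact ⟨J, ⟨hJ, S, hSmaj, hScons, hSmax, hSJ⟩, hSJ (Finset.singleton_subset_iff.1 hφS)⟩
end

section
/- The Young rule satisfies strong unanimity: if every judgment set in profile P contains φ, then every judgment set in Y(P) contains φ. -/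
open scoped NNReal

variable {Φ : Type*} [DecidableEq Φ]

theorem majI_singleton {A : Finset Φ} {n : ℕ} {P : Fin n → Finset Φ} {i : Fin n}
    (hPA : P i ⊆ A) : majI A P {i} = P i := by
  ext ψ
  by_cases hψ : ψ ∈ P i
  · simp [majI, NaccI, Finset.filter_singleton, hψ, hPA hψ]
  · simp [majI, NaccI, Finset.filter_singleton, hψ]

theorem mem_majI_of_forall_mem {A : Finset Φ} {n : ℕ} {P : Fin n → Finset Φ}
    {I : Finset (Fin n)} {φ : Φ} (hφ : φ ∈ A) (hI : I.Nonempty) (hmem : ∀ i ∈ I, φ ∈ P i) :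
    φ ∈ majI A P I := by
  have hNacc : NaccI P I φ = I.card := by
    rw [NaccI, Finset.filter_true_of_mem hmem]
  have hpos := hI.card_pos
  simp only [majI, Finset.mem_filter, hNacc]
  exact ⟨hφ, by omega⟩

/-- the Young rule satisfies strong unanimity: if every voter accepts `φ`,
then every judgment set in `Y(P)` contains `φ`. -/
theorem young_strong_unanimity
    (A : Finset Φ) (neg : Φ → Φ) (Cons : Finset Φ → Prop)
    {n : ℕ} (hn : 0 < n) (P : Fin n → Finset Φ) (hP : ∀ i, Rational A neg Cons (P i))
    (φ : Φ) (hφ : φ ∈ A) (huna : ∀ i, φ ∈ P i) :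
    ∀ J ∈ Young A neg Cons P, φ ∈ J := by
  rintro J ⟨I, -, hmax, -, hIJ⟩
  obtain ⟨i⟩ := Fin.pos_iff_nonempty.mp hn
  -- A single rational voter is a majority-consistent subprofile, so the maximal one is nonempty.
  have hsingle : Cons (majI A P {i}) := by
    rw [majI_singleton (hP i).1]
    exact (hP i).2.2
  have hI : I.Nonempty := Finset.card_pos.mp (hmax {i} hsingle)
  exact hIJ (mem_majI_of_forall_mem hφ hI fun j _ => huna j)
end

section
/- Abstract monotonicity lemma: Let F be a rule such that F(P) is the set of judgment sets undominated under a family of partial orders ≻_P on rational judgment sets. Suppose for every profile P, every φ-improvement P' of P, and all rational J, J': (a) if J and J' agree on φ-membership then J ≻_P J' implies J ≻_{P'} J'; (b) if φ ∈ J and ¬φ ∈ J' then J ≻_P J' implies J ≻_{P'} J'. Then F is monotonic: if every set in F(P) contains φ, then every set in F(P') contains φ. -/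
open scoped NNReal

variable {Φ : Type*} [DecidableEq Φ]

/-- `P'` is a `φ`-improvement of `P`: one voter switches from `¬φ` to `φ`, all else equal. -/
def Improvement (neg : Φ → Φ) (φ : Φ) {n : ℕ} (P P' : Fin n → Finset Φ) : Prop :=
  ∃ i : Fin n, (∀ j, j ≠ i → P' j = P j) ∧ neg φ ∈ P i ∧ φ ∈ P' i ∧
    ∀ ψ, ψ ≠ φ → ψ ≠ neg φ → (ψ ∈ P i ↔ ψ ∈ P' i)

/- Suppose some rational `J` in `F(P')` rejects `φ`, so `¬φ ∈ J`. Since every set of `F(P)`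
accepts `φ`, `J ∉ F(P)`, hence `J` is dominated at `P` by some undominated, hence
`φ`-accepting, `K`. By (b) `K` still dominates `J` at `P'`, contradicting `J ∈ F(P')`. -/

theorem Set.Finite.exists_undominated_dominator {α : Type*} {r : α → α → Prop} {s : Set α}
    (hs : s.Finite) (hirr : ∀ a ∈ s, ¬ r a a)
    (htrans : ∀ a ∈ s, ∀ b ∈ s, ∀ c ∈ s, r a b → r b c → r a c)
    {a b : α} (ha : a ∈ s) (hb : b ∈ s) (hab : r a b) :
    ∃ m ∈ s, r m b ∧ ∀ c ∈ s, ¬ r c m := by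
  -- Restricted to `s`, `r` is a strict order on all of `α`, as `Set.Finite.wellFoundedOn` needs.
  let rs : α → α → Prop := fun x y => r x y ∧ x ∈ s ∧ y ∈ s
  have : IsStrictOrder α rs :=
    { irrefl := fun x h => hirr x h.2.1 h.1
      trans := fun x y z hxy hyz =>
        ⟨htrans x hxy.2.1 y hxy.2.2 z hyz.2.2 hxy.1 hyz.1, hxy.2.1, hyz.2.2⟩ }
  have hwf : WellFounded rs :=
    Subrelation.wf (fun h => ⟨h, h.2.1, h.2.2⟩) (Set.wellFoundedOn_iff.mp hs.wellFoundedOn)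
  obtain ⟨m, ⟨hm, hmb⟩, hmin⟩ := hwf.has_min {x | x ∈ s ∧ r x b} ⟨a, ha, hab⟩
  exact ⟨m, hm, hmb, fun c hc hcm =>
    hmin c ⟨hc, htrans c hc m hm b hb hcm hmb⟩ ⟨hcm, hc, hm⟩⟩

theorem finite_setOf_rational {Ψ : Type*} (A : Finset Ψ) (neg : Ψ → Ψ)
    (Cons : Finset Ψ → Prop) : {J | Rational A neg Cons J}.Finite :=
  A.powerset.finite_toSet.subset fun _ hJ => Finset.mem_powerset.mpr hJ.1

theorem abstract_monotonicity_general
    (A : Finset Φ) (neg : Φ → Φ) (Cons : Finset Φ → Prop)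
    (φ : Φ) (hφ : φ ∈ A) {n : ℕ}
    (succ : (Fin n → Finset Φ) → Finset Φ → Finset Φ → Prop)
    (hirr : ∀ P J, Rational A neg Cons J → ¬ succ P J J)
    (htrans : ∀ P J K L, Rational A neg Cons J → Rational A neg Cons K →
      Rational A neg Cons L → succ P J K → succ P K L → succ P J L)
    (hb : ∀ P P', Improvement neg φ P P' → ∀ J J', Rational A neg Cons J →
      Rational A neg Cons J' → φ ∈ J → neg φ ∈ J' → succ P J J' → succ P' J J')
    (P P' : Fin n → Finset Φ)
    (himp : Improvement neg φ P P')
    (hall : ∀ J, Rational A neg Cons J → (∀ J', Rational A neg Cons J' → ¬ succ P J' J) →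
      φ ∈ J) :
    ∀ J, Rational A neg Cons J → (∀ J', Rational A neg Cons J' → ¬ succ P' J' J) →
      φ ∈ J := by
  intro J hJ hJundom
  by_contra hφJ
  have hnegJ : neg φ ∈ J := (hJ.2.1 φ hφ).resolve_left hφJ
  obtain ⟨K₀, hK₀, hK₀J⟩ : ∃ K, Rational A neg Cons K ∧ succ P K J := by
    by_contra! h
    exact hφJ (hall J hJ h)
  obtain ⟨K, hK, hKJ, hKundom⟩ := (finite_setOf_rational A neg Cons).exists_undominated_dominator
    (hirr P) (fun J hJ K hK L hL => htrans P J K L hJ hK hL) hK₀ hJ hK₀J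
  exact hJundom K hK (hb P P' himp K J hK hJ (hall K hK hKundom) hnegJ hKJ)

/-- abstract monotonicity lemma: let `F` map each profile `P` to the set of
rational judgment sets undominated under a strict partial order `≻_P`. If, for every
`φ`-improvement `P'` of `P`, (a) domination among judgment sets agreeing on `φ` is
preserved, and (b) domination of a `¬φ`-set by a `φ`-set is preserved, then `F` is
monotonic: if every set in `F(P)` contains `φ`, so does every set in `F(P')`. -/
theorem abstract_monotonicity
    (A : Finset Φ) (neg : Φ → Φ) (Cons : Finset Φ → Prop)
    (φ : Φ) (hφ : φ ∈ A) {n : ℕ}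
    (succ : (Fin n → Finset Φ) → Finset Φ → Finset Φ → Prop)
    (hirr : ∀ P J, Rational A neg Cons J → ¬ succ P J J)
    (htrans : ∀ P J K L, Rational A neg Cons J → Rational A neg Cons K →
      Rational A neg Cons L → succ P J K → succ P K L → succ P J L)
    (ha : ∀ P P', Improvement neg φ P P' → ∀ J J', Rational A neg Cons J →
      Rational A neg Cons J' → (φ ∈ J ↔ φ ∈ J') → succ P J J' → succ P' J J')
    (hb : ∀ P P', Improvement neg φ P P' → ∀ J J', Rational A neg Cons J →
      Rational A neg Cons J' → φ ∈ J → neg φ ∈ J' → succ P J J' → succ P' J J')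
    (P P' : Fin n → Finset Φ)
    (hP : ∀ i, Rational A neg Cons (P i)) (hP' : ∀ i, Rational A neg Cons (P' i))
    (himp : Improvement neg φ P P')
    (hall : ∀ J, Rational A neg Cons J → (∀ J', Rational A neg Cons J' → ¬ succ P J' J) →
      φ ∈ J) :
    ∀ J, Rational A neg Cons J → (∀ J', Rational A neg Cons J' → ¬ succ P' J' J) →
      φ ∈ J :=
  abstract_monotonicity_general A neg Cons φ hφ succ hirr htrans hb P P' himp hall
end

section
/- MC is monotonic: if every judgment set in MC(P) contains φ and P' is a φ-improvement of P, then every judgment set in MC(P') contains φ. -/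
open scoped NNReal

variable {Φ : Type*} [DecidableEq Φ]

/-
If `¬φ` were in `m(P)`, some maximal consistent subset of `m(P)` would contain `¬φ`
and its rational extension, an element of `MC(P)`, could not contain `φ`. So `¬φ ∉ m(P)`, and the
improvement gives `m(P) ⊆ m(P') ⊆ m(P) ∪ {φ}`. Hence a maximal consistent subset of `m(P')`
avoiding `φ` lies in `m(P)` and is maximal there too, so a judgment set of `MC(P')` without `φ`
would already belong to `MC(P)`.
-/

section Majority

variable {n : ℕ} {P P' : Fin n → Finset Φ}

theorem Nacc_mono {ψ : Φ} (h : ∀ j, ψ ∈ P j → ψ ∈ P' j) : Nacc P ψ ≤ Nacc P' ψ :=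
  Finset.card_le_card fun j => by simpa only [Finset.mem_filter, Finset.mem_univ, true_and] using h j

theorem mem_maj {A : Finset Φ} {ψ : Φ} : ψ ∈ maj A P ↔ ψ ∈ A ∧ n < 2 * Nacc P ψ :=
  Finset.mem_filter

theorem mem_maj_mono {A : Finset Φ} {ψ : Φ} (h : ∀ j, ψ ∈ P j → ψ ∈ P' j) (hψ : ψ ∈ maj A P) :
    ψ ∈ maj A P' :=
  mem_maj.2 ⟨(mem_maj.1 hψ).1, (mem_maj.1 hψ).2.trans_le (Nat.mul_le_mul_left 2 (Nacc_mono h))⟩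

theorem exists_mem_of_mem_maj {A : Finset Φ} {ψ : Φ} (hψ : ψ ∈ maj A P) : ∃ j, ψ ∈ P j := by
  by_contra! h
  have : Nacc P ψ = 0 := Finset.card_eq_zero.2 (Finset.filter_eq_empty_iff.2 fun j _ => h j)
  have := (mem_maj.1 hψ).2
  omega

end Majority

namespace Improvement

variable {neg : Φ → Φ} {φ : Φ} {n : ℕ} {P P' : Fin n → Finset Φ}

omit [DecidableEq Φ] in
theorem mem_of_ne_neg (himp : Improvement neg φ P P') {ψ : Φ} (hψ : ψ ≠ neg φ) (j : Fin n)
    (h : ψ ∈ P j) : ψ ∈ P' j := by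
  obtain ⟨i, hother, -, hφ, hiff⟩ := himp
  rcases eq_or_ne j i with rfl | hji
  · rcases eq_or_ne ψ φ with rfl | hψφ
    · exact hφ
    · exact (hiff ψ hψφ hψ).1 h
  · rwa [hother j hji]

omit [DecidableEq Φ] in
theorem mem_of_ne (himp : Improvement neg φ P P') {ψ : Φ} (hψ : ψ ≠ φ) (j : Fin n)
    (h : ψ ∈ P' j) : ψ ∈ P j := by
  obtain ⟨i, hother, hneg, -, hiff⟩ := himp
  rcases eq_or_ne j i with rfl | hji
  · rcases eq_or_ne ψ (neg φ) with rfl | hψneg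
    · exact hneg
    · exact (hiff ψ hψ hψneg).2 h
  · rwa [← hother j hji]

end Improvement

section MaximalConsistent

variable {Cons : Finset Φ → Prop}

omit [DecidableEq Φ] in
theorem exists_le_maximal_consistent {M S : Finset Φ} (hSM : S ⊆ M) (hS : Cons S) :
    ∃ S', S ⊆ S' ∧ Maximal (fun T => T ⊆ M ∧ Cons T) S' := by
  have hfin : {T | T ⊆ M ∧ Cons T}.Finite :=
    M.powerset.finite_toSet.subset fun T hT => Finset.mem_powerset.2 hT.1
  exact hfin.exists_le_maximal ⟨hSM, hS⟩

theorem mem_MC_iff {A : Finset Φ} {neg : Φ → Φ} {n : ℕ} {P : Fin n → Finset Φ}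
    {J : Finset Φ} :
    J ∈ MC A neg Cons P ↔
      Rational A neg Cons J ∧ ∃ S, Maximal (fun T => T ⊆ maj A P ∧ Cons T) S ∧ S ⊆ J := by
  simp only [MC, Set.mem_ofPred_eq, maximal_iff]
  refine and_congr_right fun _ => ⟨?_, ?_⟩
  · rintro ⟨S, hSM, hS, hmax, hSJ⟩
    exact ⟨S, ⟨⟨hSM, hS⟩, fun T hT hST => (hmax T hST hT.1 hT.2).symm⟩, hSJ⟩
  · rintro ⟨S, ⟨⟨hSM, hS⟩, hmax⟩, hSJ⟩
    exact ⟨S, hSM, hS, fun T hST hTM hT => (hmax ⟨hTM, hT⟩ hST).symm, hSJ⟩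

theorem exists_superset_mem_MC {A : Finset Φ} {neg : Φ → Φ}
    (hext : ∀ S : Finset Φ, S ⊆ A → Cons S → ∃ J, Rational A neg Cons J ∧ S ⊆ J)
    {n : ℕ} {P : Fin n → Finset Φ} {S : Finset Φ} (hSM : S ⊆ maj A P) (hS : Cons S) :
    ∃ J ∈ MC A neg Cons P, S ⊆ J := by
  obtain ⟨S', hSS', hmax⟩ := exists_le_maximal_consistent hSM hS
  obtain ⟨J, hJ, hS'J⟩ := hext S' (hmax.prop.1.trans (Finset.filter_subset _ _)) hmax.prop.2
  exact ⟨J, mem_MC_iff.2 ⟨hJ, S', hmax, hS'J⟩, hSS'.trans hS'J⟩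

end MaximalConsistent

theorem mc_monotonic_general
    (A : Finset Φ) (neg : Φ → Φ) (Cons : Finset Φ → Prop)
    (hnotboth : ∀ S : Finset Φ, Cons S → ∀ φ ∈ A, φ ∈ S → neg φ ∉ S)
    (hmono : ∀ S T : Finset Φ, S ⊆ T → Cons T → Cons S)
    (hext : ∀ S : Finset Φ, S ⊆ A → Cons S → ∃ J, Rational A neg Cons J ∧ S ⊆ J)
    {n : ℕ} (P P' : Fin n → Finset Φ)
    (hP : ∀ i, Rational A neg Cons (P i))
    (φ : Φ) (hφ : φ ∈ A) (himp : Improvement neg φ P P')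
    (hall : ∀ J ∈ MC A neg Cons P, φ ∈ J) :
    ∀ J ∈ MC A neg Cons P', φ ∈ J := by
  have hneg : neg φ ∉ maj A P := by
    intro hneg
    obtain ⟨j, hj⟩ := exists_mem_of_mem_maj hneg
    obtain ⟨J, hJ, hnegJ⟩ := exists_superset_mem_MC hext (Finset.singleton_subset_iff.2 hneg)
      (hmono _ _ (Finset.singleton_subset_iff.2 hj) (hP j).2.2)
    exact hnotboth J (mem_MC_iff.1 hJ).1.2.2 φ hφ (hall J hJ) (Finset.singleton_subset_iff.1 hnegJ)
  have hmaj : maj A P ⊆ maj A P' := fun ψ hψ =>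
    mem_maj_mono (himp.mem_of_ne_neg (ne_of_mem_of_not_mem hψ hneg)) hψ
  intro J hJ
  by_contra hφJ
  obtain ⟨hJ, S, hmax, hSJ⟩ := mem_MC_iff.1 hJ
  have hSM : S ⊆ maj A P := fun ψ hψ =>
    mem_maj_mono (himp.mem_of_ne (ne_of_mem_of_not_mem (hSJ hψ) hφJ)) (hmax.prop.1 hψ)
  have hmaxP : Maximal (fun T => T ⊆ maj A P ∧ Cons T) S :=
    hmax.mono (fun T hT => ⟨hT.1.trans hmaj, hT.2⟩) ⟨hSM, hmax.prop.2⟩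
  exact hφJ (hall J (mem_MC_iff.2 ⟨hJ, S, hmaxP, hSJ⟩))

/-- MC is monotonic: if every judgment set in `MC(P)` contains `φ` and `P'`
is a `φ`-improvement of `P`, then every judgment set in `MC(P')` contains `φ`. -/
theorem mc_monotonic
    (A : Finset Φ) (neg : Φ → Φ) (Cons : Finset Φ → Prop)
    (hA_neg : ∀ φ ∈ A, neg φ ∈ A)
    (hneg_ne : ∀ φ ∈ A, neg φ ≠ φ)
    (hneg_neg : ∀ φ ∈ A, neg (neg φ) = φ)
    (hnotboth : ∀ S : Finset Φ, Cons S → ∀ φ ∈ A, φ ∈ S → neg φ ∉ S)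
    (hmono : ∀ S T : Finset Φ, S ⊆ T → Cons T → Cons S)
    (hext : ∀ S : Finset Φ, S ⊆ A → Cons S → ∃ J, Rational A neg Cons J ∧ S ⊆ J)
    {n : ℕ} (P P' : Fin n → Finset Φ)
    (hP : ∀ i, Rational A neg Cons (P i)) (hP' : ∀ i, Rational A neg Cons (P' i))
    (φ : Φ) (hφ : φ ∈ A) (himp : Improvement neg φ P P')
    (hall : ∀ J ∈ MC A neg Cons P, φ ∈ J) :
    ∀ J ∈ MC A neg Cons P', φ ∈ J :=
  mc_monotonic_general A neg Cons hnotboth hmono hext P P' hP φ hφ himp hall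
end

section
/- For any distance d on rational judgment sets satisfying agreement monotonicity, both the sum-aggregation rule F^{d,Σ} and the max-aggregation rule F^{d,max} are monotonic. -/
open scoped NNReal

variable {Φ : Type*} [DecidableEq Φ]

/-- The sum-distance rule `F^{d,Σ}`. -/
def Fsum (A : Finset Φ) (neg : Φ → Φ) (Cons : Finset Φ → Prop)
    (d : Finset Φ → Finset Φ → ℝ≥0) {n : ℕ} (P : Fin n → Finset Φ) : Set (Finset Φ) :=
  {J | Rational A neg Cons J ∧ ∀ J', Rational A neg Cons J' →
      ∑ i, d J (P i) ≤ ∑ i, d J' (P i)}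

/-!
If a voter switches from `¬φ` to `φ`, then by agreement monotonicity (together with symmetry of
`d`) every rational set containing `φ` moves weakly closer to the profile and every rational set
containing `¬φ` moves weakly away from it, under any monotone aggregation of the voters' distances.
So if a set `J'` with `¬φ` were optimal after the switch, comparing it with an optimal set `J`
before the switch (which contains `φ`) shows that `J'` was already optimal before the switch,
a contradiction.
-/

theorem forall_isMinOn_imp_of_le_of_le {α β : Type*} [LinearOrder β] {s : Set α}
    (hs : s.Finite) {f g : α → β} {p : α → Prop}
    (hle : ∀ x ∈ s, p x → g x ≤ f x) (hge : ∀ x ∈ s, ¬p x → f x ≤ g x)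
    (hf : ∀ x ∈ s, IsMinOn f s x → p x) : ∀ x ∈ s, IsMinOn g s x → p x := by
  intro x hx hxg
  by_contra hpx
  obtain ⟨y, hy, hyf⟩ := s.exists_min_image f hs ⟨x, hx⟩
  have hpy : p y := hf y hy (isMinOn_iff.mpr hyf)
  refine hpx (hf x hx (isMinOn_iff.mpr fun z hz => ?_))
  calc f x ≤ g x := hge x hx hpx
    _ ≤ g y := isMinOn_iff.mp hxg y hy
    _ ≤ f y := hle y hy hpy
    _ ≤ f z := hyf z hz

theorem Finset.sdiff_ssubset_sdiff_of_inter_subset {α : Type*} [DecidableEq α]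
    {J K K' : Finset α} {a : α} (hsub : J ∩ K ⊆ K') (haJ : a ∈ J) (haK : a ∉ K)
    (haK' : a ∈ K') : J \ K' ⊂ J \ K := by
  refine (Finset.ssubset_iff_of_subset fun ψ hψ => ?_).mpr
    ⟨a, Finset.mem_sdiff.mpr ⟨haJ, haK⟩, fun h => (Finset.mem_sdiff.mp h).2 haK'⟩
  obtain ⟨hψJ, hψK'⟩ := Finset.mem_sdiff.mp hψ
  exact Finset.mem_sdiff.mpr ⟨hψJ, fun hψK => hψK' (hsub (Finset.mem_inter.mpr ⟨hψJ, hψK⟩))⟩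

theorem Function.comp_le_comp_of_eq_of_ne {ι α β : Type*} [Preorder β] {P P' : ι → α}
    {g : α → β} {i : ι} (hne : ∀ j, j ≠ i → P' j = P j) (hi : g (P' i) ≤ g (P i)) :
    g ∘ P' ≤ g ∘ P := by
  intro j
  by_cases hj : j = i
  · subst hj
    exact hi
  · simp only [Function.comp_apply, hne j hj, le_refl]

theorem Rational.finite {α : Type*} (A : Finset α) (neg : α → α) (Cons : Finset α → Prop) :
    {J | Rational A neg Cons J}.Finite :=
  A.powerset.finite_toSet.subset fun _ hJ => Finset.mem_coe.mpr (Finset.mem_powerset.mpr hJ.1)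

section Ballot

variable {φ : Φ} {neg : Φ → Φ} {K K' J : Finset Φ}

theorem inter_subset_of_switch (hK' : φ ∈ K')
    (hout : ∀ ψ, ψ ≠ φ → ψ ≠ neg φ → (ψ ∈ K ↔ ψ ∈ K')) (hJ : neg φ ∉ J) : J ∩ K ⊆ K' := by
  intro ψ hψ
  obtain ⟨hψJ, hψK⟩ := Finset.mem_inter.mp hψ
  by_cases h₁ : ψ = φ
  · exact h₁ ▸ hK'
  · exact (hout ψ h₁ (fun h₂ => hJ (h₂ ▸ hψJ))).mp hψK

theorem inter_subset_of_switch' (hK : neg φ ∈ K)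
    (hout : ∀ ψ, ψ ≠ φ → ψ ≠ neg φ → (ψ ∈ K ↔ ψ ∈ K')) (hJ : φ ∉ J) : J ∩ K' ⊆ K := by
  intro ψ hψ
  obtain ⟨hψJ, hψK'⟩ := Finset.mem_inter.mp hψ
  by_cases h₂ : ψ = neg φ
  · exact h₂ ▸ hK
  · exact (hout ψ (fun h₁ => hJ (h₁ ▸ hψJ)) h₂).mpr hψK'

end Ballot

section Distance

variable {A : Finset Φ} {neg : Φ → Φ} {Cons : Finset Φ → Prop} {d : Finset Φ → Finset Φ → ℝ≥0}
  {φ : Φ} {K K' J : Finset Φ}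

theorem dist_le_dist_of_sdiff_ssubset
    (hsymm : ∀ J J', Rational A neg Cons J → Rational A neg Cons J' → d J J' = d J' J)
    (hagree : ∀ J J' J'', Rational A neg Cons J → Rational A neg Cons J' →
      Rational A neg Cons J'' → (J'' \ J') ⊂ (J'' \ J) → d J' J'' ≤ d J J'')
    (hJ : Rational A neg Cons J) (hK : Rational A neg Cons K) (hK' : Rational A neg Cons K')
    (hss : J \ K' ⊂ J \ K) : d J K' ≤ d J K := by
  rw [hsymm J K' hJ hK', hsymm J K hJ hK]
  exact hagree K K' J hK hK' hJ hss

theorem dist_switch_le_of_mem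
    (hnotboth : ∀ S : Finset Φ, Cons S → ∀ φ ∈ A, φ ∈ S → neg φ ∉ S) (hφ : φ ∈ A)
    (hsymm : ∀ J J', Rational A neg Cons J → Rational A neg Cons J' → d J J' = d J' J)
    (hagree : ∀ J J' J'', Rational A neg Cons J → Rational A neg Cons J' →
      Rational A neg Cons J'' → (J'' \ J') ⊂ (J'' \ J) → d J' J'' ≤ d J J'')
    (hJ : Rational A neg Cons J) (hK : Rational A neg Cons K) (hK' : Rational A neg Cons K')
    (hnegK : neg φ ∈ K) (hφK' : φ ∈ K') (hout : ∀ ψ, ψ ≠ φ → ψ ≠ neg φ → (ψ ∈ K ↔ ψ ∈ K'))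
    (hφJ : φ ∈ J) : d J K' ≤ d J K :=
  dist_le_dist_of_sdiff_ssubset hsymm hagree hJ hK hK' <|
    Finset.sdiff_ssubset_sdiff_of_inter_subset
      (inter_subset_of_switch hφK' hout (hnotboth J hJ.2.2 φ hφ hφJ)) hφJ
      (fun h => hnotboth K hK.2.2 φ hφ h hnegK) hφK'

theorem dist_le_dist_switch_of_not_mem
    (hnotboth : ∀ S : Finset Φ, Cons S → ∀ φ ∈ A, φ ∈ S → neg φ ∉ S) (hφ : φ ∈ A)
    (hsymm : ∀ J J', Rational A neg Cons J → Rational A neg Cons J' → d J J' = d J' J)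
    (hagree : ∀ J J' J'', Rational A neg Cons J → Rational A neg Cons J' →
      Rational A neg Cons J'' → (J'' \ J') ⊂ (J'' \ J) → d J' J'' ≤ d J J'')
    (hJ : Rational A neg Cons J) (hK : Rational A neg Cons K) (hK' : Rational A neg Cons K')
    (hnegK : neg φ ∈ K) (hφK' : φ ∈ K') (hout : ∀ ψ, ψ ≠ φ → ψ ≠ neg φ → (ψ ∈ K ↔ ψ ∈ K'))
    (hφJ : φ ∉ J) : d J K ≤ d J K' :=
  dist_le_dist_of_sdiff_ssubset hsymm hagree hJ hK' hK <|
    Finset.sdiff_ssubset_sdiff_of_inter_subset (inter_subset_of_switch' hnegK hout hφJ)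
      ((hJ.2.1 φ hφ).resolve_left hφJ) (hnotboth K' hK'.2.2 φ hφ hφK') hnegK

/-- A distance rule with monotone aggregation `agg` is monotonic. -/
theorem forall_mem_isMinOn_of_improvement
    (hnotboth : ∀ S : Finset Φ, Cons S → ∀ φ ∈ A, φ ∈ S → neg φ ∉ S) (hφ : φ ∈ A)
    (hsymm : ∀ J J', Rational A neg Cons J → Rational A neg Cons J' → d J J' = d J' J)
    (hagree : ∀ J J' J'', Rational A neg Cons J → Rational A neg Cons J' →
      Rational A neg Cons J'' → (J'' \ J') ⊂ (J'' \ J) → d J' J'' ≤ d J J'')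
    {n : ℕ} {agg : (Fin n → ℝ≥0) → ℝ≥0} (hagg : Monotone agg) {P P' : Fin n → Finset Φ}
    (hP : ∀ i, Rational A neg Cons (P i)) (hP' : ∀ i, Rational A neg Cons (P' i))
    (himp : Improvement neg φ P P')
    (hF : ∀ J ∈ {J | Rational A neg Cons J},
      IsMinOn (fun J => agg fun i => d J (P i)) {J | Rational A neg Cons J} J → φ ∈ J) :
    ∀ J ∈ {J | Rational A neg Cons J},
      IsMinOn (fun J => agg fun i => d J (P' i)) {J | Rational A neg Cons J} J → φ ∈ J := by
  obtain ⟨i, hne, hnegK, hφK', hout⟩ := himp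
  refine forall_isMinOn_imp_of_le_of_le (Rational.finite A neg Cons) (fun J hJ hφJ => ?_)
    (fun J hJ hφJ => ?_) hF
  · exact hagg <| Function.comp_le_comp_of_eq_of_ne (g := d J) hne <|
      dist_switch_le_of_mem hnotboth hφ hsymm hagree hJ (hP i) (hP' i) hnegK hφK' hout hφJ
  · refine hagg <| Function.comp_le_comp_of_eq_of_ne (g := d J) (fun j hj => (hne j hj).symm) ?_
    exact dist_le_dist_switch_of_not_mem hnotboth hφ hsymm hagree hJ (hP i) (hP' i) hnegK hφK'
      hout hφJ

end Distance

theorem agreement_monotonic_distance_rules_monotonic_general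
    (A : Finset Φ) (neg : Φ → Φ) (Cons : Finset Φ → Prop)
    (hnotboth : ∀ S : Finset Φ, Cons S → ∀ φ ∈ A, φ ∈ S → neg φ ∉ S)
    (φ : Φ) (hφ : φ ∈ A)
    (d : Finset Φ → Finset Φ → ℝ≥0)
    (hsymm : ∀ J J', Rational A neg Cons J → Rational A neg Cons J' → d J J' = d J' J)
    (hagree : ∀ J J' J'', Rational A neg Cons J → Rational A neg Cons J' →
      Rational A neg Cons J'' → (J'' \ J') ⊂ (J'' \ J) → d J' J'' ≤ d J J'') :
    (∀ {n : ℕ} (P P' : Fin n → Finset Φ), (∀ i, Rational A neg Cons (P i)) →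
      (∀ i, Rational A neg Cons (P' i)) → Improvement neg φ P P' →
      (∀ J ∈ Fsum A neg Cons d P, φ ∈ J) → ∀ J ∈ Fsum A neg Cons d P', φ ∈ J) ∧
    (∀ {n : ℕ} (P P' : Fin n → Finset Φ), (∀ i, Rational A neg Cons (P i)) →
      (∀ i, Rational A neg Cons (P' i)) → Improvement neg φ P P' →
      (∀ J ∈ Fmax A neg Cons d P, φ ∈ J) → ∀ J ∈ Fmax A neg Cons d P', φ ∈ J) := by
  have sum_mono {n : ℕ} : Monotone fun v : Fin n → ℝ≥0 => ∑ i, v i :=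
    fun _ _ h => Finset.sum_le_sum fun i _ => h i
  have sup_mono {n : ℕ} : Monotone fun v : Fin n → ℝ≥0 => Finset.univ.sup v :=
    fun _ _ h => Finset.sup_mono_fun fun i _ => h i
  refine ⟨fun P P' hP hP' himp hF J hJ => ?_, fun P P' hP hP' himp hF J hJ => ?_⟩
  · exact forall_mem_isMinOn_of_improvement hnotboth hφ hsymm hagree sum_mono hP hP' himp
      (fun J hJ hmin => hF J ⟨hJ, isMinOn_iff.mp hmin⟩) J hJ.1 (isMinOn_iff.mpr hJ.2)
  · exact forall_mem_isMinOn_of_improvement hnotboth hφ hsymm hagree sup_mono hP hP' himp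
      (fun J hJ hmin => hF J ⟨hJ, isMinOn_iff.mp hmin⟩) J hJ.1 (isMinOn_iff.mpr hJ.2)

/-- for any distance `d` on rational judgment sets satisfying agreement
monotonicity, both `F^{d,Σ}` and `F^{d,max}` are monotonic. -/
theorem agreement_monotonic_distance_rules_monotonic
    (A : Finset Φ) (neg : Φ → Φ) (Cons : Finset Φ → Prop)
    (hA_neg : ∀ φ ∈ A, neg φ ∈ A)
    (hnotboth : ∀ S : Finset Φ, Cons S → ∀ φ ∈ A, φ ∈ S → neg φ ∉ S)
    (φ : Φ) (hφ : φ ∈ A)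
    (d : Finset Φ → Finset Φ → ℝ≥0)
    (hsymm : ∀ J J', Rational A neg Cons J → Rational A neg Cons J' → d J J' = d J' J)
    (hzero : ∀ J J', Rational A neg Cons J → Rational A neg Cons J' → (d J J' = 0 ↔ J = J'))
    (hagree : ∀ J J' J'', Rational A neg Cons J → Rational A neg Cons J' →
      Rational A neg Cons J'' → (J'' \ J') ⊂ (J'' \ J) → d J' J'' ≤ d J J'') :
    (∀ {n : ℕ} (P P' : Fin n → Finset Φ), (∀ i, Rational A neg Cons (P i)) →
      (∀ i, Rational A neg Cons (P' i)) → Improvement neg φ P P' →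
      (∀ J ∈ Fsum A neg Cons d P, φ ∈ J) → ∀ J ∈ Fsum A neg Cons d P', φ ∈ J) ∧
    (∀ {n : ℕ} (P P' : Fin n → Finset Φ), (∀ i, Rational A neg Cons (P i)) →
      (∀ i, Rational A neg Cons (P' i)) → Improvement neg φ P P' →
      (∀ J ∈ Fmax A neg Cons d P, φ ∈ J) → ∀ J ∈ Fmax A neg Cons d P', φ ∈ J) :=
  agreement_monotonic_distance_rules_monotonic_general A neg Cons hnotboth φ hφ d hsymm hagree
end

section
/- Max-distance rules satisfy weak reinforcement: if F(P) = argmin_J max_{J_i∈P} d(J,J_i) and F(P) ∩ F(Q) ≠ ∅, then F(P+Q) ∩ (F(P) ∩ F(Q)) ≠ ∅. -/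
open scoped NNReal

variable {Φ : Type*} [DecidableEq Φ]

theorem Finset.sup_univ_fin_append {α β : Type*} [SemilatticeSup α] [OrderBot α] {n q : ℕ}
    (g : β → α) (P : Fin n → β) (Q : Fin q → β) :
    (Finset.univ.sup fun i => g (Fin.append P Q i)) =
      (Finset.univ.sup fun i => g (P i)) ⊔ Finset.univ.sup fun j => g (Q j) :=
  eq_of_forall_ge_iff fun c => by simp [Fin.forall_fin_add]

theorem max_distance_rule_weak_reinforcement_general
    (A : Finset Φ) (neg : Φ → Φ) (Cons : Finset Φ → Prop)
    (d : Finset Φ → Finset Φ → ℝ≥0)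
    {n q : ℕ}
    (P : Fin n → Finset Φ) (Q : Fin q → Finset Φ)
    (hne : (Fmax A neg Cons d P ∩ Fmax A neg Cons d Q).Nonempty) :
    (Fmax A neg Cons d (Fin.append P Q) ∩
      (Fmax A neg Cons d P ∩ Fmax A neg Cons d Q)).Nonempty :=
  hne.mono fun J hJ => by
    obtain ⟨hJP, hJQ⟩ := hJ
    refine ⟨⟨hJP.1, fun J' hJ' => ?_⟩, hJP, hJQ⟩
    simp only [Finset.sup_univ_fin_append (d _)]
    exact sup_le_sup (hJP.2 J' hJ') (hJQ.2 J' hJ')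

/-- max-distance rules satisfy weak reinforcement: if
`F(P) ∩ F(Q) ≠ ∅` then `F(P+Q) ∩ (F(P) ∩ F(Q)) ≠ ∅`. -/
theorem max_distance_rule_weak_reinforcement
    (A : Finset Φ) (neg : Φ → Φ) (Cons : Finset Φ → Prop)
    (d : Finset Φ → Finset Φ → ℝ≥0)
    (hsymm : ∀ J J', Rational A neg Cons J → Rational A neg Cons J' → d J J' = d J' J)
    (hzero : ∀ J J', Rational A neg Cons J → Rational A neg Cons J' → (d J J' = 0 ↔ J = J'))
    {n q : ℕ} (hn : 0 < n) (hq : 0 < q)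
    (P : Fin n → Finset Φ) (Q : Fin q → Finset Φ)
    (hne : (Fmax A neg Cons d P ∩ Fmax A neg Cons d Q).Nonempty) :
    (Fmax A neg Cons d (Fin.append P Q) ∩
      (Fmax A neg Cons d P ∩ Fmax A neg Cons d Q)).Nonempty :=
  max_distance_rule_weak_reinforcement_general A neg Cons d P Q hne
end
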